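/- arXiv:2104.13317 — 3 statements merged into one kernel-verified Lean document; each statement's English description precedes it below -/
import Mathlib

section
/- Let L∞ > 0, A∞, K∞ be real constants, and suppose L, A : (0,∞) → ℝ satisfy L(R) = L∞·sinh R − K∞·e^{−R} + o(e^{−R}) and A(R) = L∞·cosh R + A∞ + o(e^{−R}) as R → ∞. If moreover L(R)² ≥ (2·L(R)·A(R))/sinh R + A(R)² for all sufficiently large R, then −L∞ ≥ A∞. -/
/-!
Since `cosh R - sinh R = e^{-R}`, the expansions give `L - A → -A∞`, while `L / sinh R` and
`A / cosh R` tend to `L∞`. Dividing `L² - 2LA / sinh R - A² ≥ 0` by `cosh R` and writing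
`L² - A² = (L - A)(L + A)`, the left side tends to `-2 L∞ A∞ - 2 L∞²`, which is therefore `≥ 0`.
-/

open Filter Asymptotics Topology Real

theorem Real.tendsto_cosh_atTop : Tendsto cosh atTop atTop := by
  have h := (tendsto_exp_atTop.atTop_div_const two_pos).atTop_add
    (tendsto_exp_neg_atTop_nhds_zero.div_const 2)
  exact h.congr fun x => by rw [cosh_eq, add_div]

theorem Real.tendsto_sinh_atTop : Tendsto sinh atTop atTop := by
  have h := tendsto_cosh_atTop.atTop_add tendsto_exp_neg_atTop_nhds_zero.neg
  exact h.congr fun x => by rw [← cosh_sub_sinh]; ring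

theorem tendsto_div_of_tendsto_sub_const_mul {α : Type*} {l : Filter α} {f g : α → ℝ}
    {c ℓ : ℝ} (hfg : Tendsto (fun x => f x - c * g x) l (𝓝 ℓ)) (hg : Tendsto g l atTop) :
    Tendsto (fun x => f x / g x) l (𝓝 c) := by
  have h := (hfg.div_atTop hg).add_const c
  rw [zero_add] at h
  refine h.congr' ?_
  filter_upwards [hg.eventually_ne_atTop 0] with x hx
  field_simp
  ring

theorem sub_mul_add_div_sub_two_mul_div_nonneg {L A s c : ℝ} (hs : 0 < s) (hc : 0 < c)
    (h : 2 * L * A / s + A ^ 2 ≤ L ^ 2) :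
    0 ≤ (L - A) * ((L + A) / c) - 2 * (L / s) * (A / c) := by
  have key : (L - A) * ((L + A) / c) - 2 * (L / s) * (A / c)
      = (L ^ 2 - (2 * L * A / s + A ^ 2)) / c := by
    field_simp
    ring
  rw [key]
  exact div_nonneg (sub_nonneg.2 h) hc.le

theorem le_sub_of_tendsto_sub_sinh_of_tendsto_sub_cosh {L A : ℝ → ℝ} {c ℓ a : ℝ} (hc : 0 < c)
    (hL : Tendsto (fun R => L R - c * sinh R) atTop (𝓝 ℓ))
    (hA : Tendsto (fun R => A R - c * cosh R) atTop (𝓝 a))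
    (hineq : ∀ᶠ R in atTop, 2 * L R * A R / sinh R + A R ^ 2 ≤ L R ^ 2) :
    c ≤ ℓ - a := by
  have hdiff : Tendsto (fun R => L R - A R) atTop (𝓝 (ℓ - a)) := by
    have h := (hL.sub hA).sub (tendsto_exp_neg_atTop_nhds_zero.const_mul c)
    rw [mul_zero, sub_zero] at h
    exact h.congr fun R => by rw [← cosh_sub_sinh]; ring
  have hLs := tendsto_div_of_tendsto_sub_const_mul hL tendsto_sinh_atTop
  have hAc := tendsto_div_of_tendsto_sub_const_mul hA tendsto_cosh_atTop
  have hsum : Tendsto (fun R => (L R + A R) / cosh R) atTop (𝓝 (2 * c)) := by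
    have h := (hdiff.div_atTop tendsto_cosh_atTop).add (hAc.const_mul 2)
    rw [zero_add] at h
    exact h.congr fun R => by ring
  have hlim := (hdiff.mul hsum).sub ((hLs.const_mul 2).mul hAc)
  have hnonneg : ∀ᶠ R in atTop,
      0 ≤ (L R - A R) * ((L R + A R) / cosh R) - 2 * (L R / sinh R) * (A R / cosh R) := by
    filter_upwards [hineq, eventually_gt_atTop 0] with R hR hR0
    exact sub_mul_add_div_sub_two_mul_div_nonneg (sinh_pos_iff.2 hR0) (cosh_pos R) hR
  have := ge_of_tendsto hlim hnonneg
  nlinarith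

/-- The asymptotic step in the renormalized area inequality: if
`L(R) = L∞ sinh R − K∞ e^{−R} + o(e^{−R})`, `A(R) = L∞ cosh R + A∞ + o(e^{−R})`
and `L(R)² ≥ 2 L(R) A(R)/sinh R + A(R)²` for all large `R`, then `−L∞ ≥ A∞`. -/
theorem renormalized_area_inequality_step (L A : ℝ → ℝ) (Linf Ainf Kinf : ℝ)
    (hL0 : 0 < Linf)
    (hL : (fun R => L R - (Linf * Real.sinh R - Kinf * Real.exp (-R)))
      =o[atTop] fun R => Real.exp (-R))
    (hA : (fun R => A R - (Linf * Real.cosh R + Ainf))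
      =o[atTop] fun R => Real.exp (-R))
    (hineq : ∀ᶠ R in atTop,
      2 * L R * A R / Real.sinh R + (A R) ^ 2 ≤ (L R) ^ 2) :
    -Linf ≥ Ainf := by
  have hL' : Tendsto (fun R => L R - Linf * sinh R) atTop (𝓝 0) := by
    have h := (hL.trans_tendsto tendsto_exp_neg_atTop_nhds_zero).sub
      (tendsto_exp_neg_atTop_nhds_zero.const_mul Kinf)
    rw [mul_zero, sub_zero] at h
    exact h.congr fun R => by ring
  have hA' : Tendsto (fun R => A R - Linf * cosh R) atTop (𝓝 Ainf) := by
    have h := (hA.trans_tendsto tendsto_exp_neg_atTop_nhds_zero).add_const Ainf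
    rw [zero_add] at h
    exact h.congr fun R => by ring
  have := le_sub_of_tendsto_sub_sinh_of_tendsto_sub_cosh hL0 hL' hA' hineq
  linarith
end

section
/- Let L∞ > 0, A∞, K∞ be real constants with A∞ = −L∞, and suppose L, A : (0,∞) → ℝ satisfy L(R) = L∞·sinh R − K∞·e^{−R} + o(e^{−R}) and A(R) = L∞·cosh R + A∞ + o(e^{−R}) as R → ∞, together with L(R)² ≥ (2·L(R)·A(R))/sinh R + A(R)² for all large R. Then K∞ ≤ 0. -/
/-!
Write `u = e^{-R}`, `p = L - A`, `q = L + A`. For `sinh R > 0` the cone comparison inequality is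
equivalent to `q (2 sinh R · p - q) + p² ≥ 0`. Under the expansions with `A∞ = -L∞` one finds
`p → L∞`, `u q → L∞` and, after the growing terms cancel, `2 sinh R · p - q → -K∞`; multiplying
the inequality by `u` and letting `R → ∞` gives `-L∞ K∞ ≥ 0`.
-/

open Filter Asymptotics Topology Real

theorem tendsto_exp_mul_of_isLittleO_exp_neg {f : ℝ → ℝ}
    (hf : f =o[atTop] fun R => exp (-R)) :
    Tendsto (fun R => exp R * f R) atTop (𝓝 0) :=
  hf.tendsto_div_nhds_zero.congr fun R => by rw [exp_neg, div_inv_eq_mul, mul_comm]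

theorem div_add_sq_le_sq_iff {s : ℝ} (hs : 0 < s) (L A : ℝ) :
    2 * L * A / s + A ^ 2 ≤ L ^ 2 ↔
      0 ≤ (L + A) * (2 * s * (L - A) - (L + A)) + (L - A) ^ 2 := by
  rw [div_add' _ _ _ hs.ne', div_le_iff₀ hs, ← sub_nonneg,
    show (L + A) * (2 * s * (L - A) - (L + A)) + (L - A) ^ 2 =
      2 * (L ^ 2 * s - (2 * L * A + A ^ 2 * s)) by ring, mul_nonneg_iff_of_pos_left two_pos]

/-- In the variables `u = e^{-R}`, `L = ℓ sinh R - K u + a u`, `A = ℓ cosh R - ℓ + b u`, here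
`P = L - A`, `Q = u (L + A)`, and the second factor of the first summand is `2 sinh R · P - (L + A)`,
in which the terms of order `e^R` have cancelled. -/
noncomputable def renormalizedConeDefect (ℓ K u a b : ℝ) : ℝ :=
  let P := ℓ - (ℓ + K) * u + (a - b) * u
  let Q := ℓ - ℓ * u + (a + b - K) * u ^ 2
  Q * (-K + (a - b) + (K - a - b) * u - u * P) + u * P ^ 2

theorem exp_neg_mul_cone_eq_renormalizedConeDefect (ℓ K R L A : ℝ) :
    exp (-R) * ((L + A) * (2 * sinh R * (L - A) - (L + A)) + (L - A) ^ 2) =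
      renormalizedConeDefect ℓ K (exp (-R)) (exp R * (L - (ℓ * sinh R - K * exp (-R))))
        (exp R * (A - (ℓ * cosh R - ℓ))) := by
  have hE : exp R = (exp (-R))⁻¹ := by rw [exp_neg, inv_inv]
  have hu : exp (-R) ≠ 0 := (exp_pos _).ne'
  rw [sinh_eq, cosh_eq, hE]
  generalize exp (-R) = u at hu ⊢
  simp only [renormalizedConeDefect]
  field_simp
  ring

theorem tendsto_renormalizedConeDefect {α : Type*} {l : Filter α} {u a b : α → ℝ} (ℓ K : ℝ)
    (hu : Tendsto u l (𝓝 0)) (ha : Tendsto a l (𝓝 0)) (hb : Tendsto b l (𝓝 0)) :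
    Tendsto (fun x => renormalizedConeDefect ℓ K (u x) (a x) (b x)) l (𝓝 (-(ℓ * K))) := by
  have hc : Continuous fun p : ℝ × ℝ × ℝ => renormalizedConeDefect ℓ K p.1 p.2.1 p.2.2 := by
    unfold renormalizedConeDefect; fun_prop
  have h0 : renormalizedConeDefect ℓ K 0 0 0 = -(ℓ * K) := by
    unfold renormalizedConeDefect; ring
  have := (hc.tendsto (0, 0, 0)).comp (hu.prodMk_nhds (ha.prodMk_nhds hb))
  simpa only [Function.comp_def, h0] using this

/-- The rigidity step: under the same expansions with `A∞ = −L∞`, the cone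
comparison inequality forces `K∞ ≤ 0`. -/
theorem renormalized_area_rigidity_step (L A : ℝ → ℝ) (Linf Ainf Kinf : ℝ)
    (hL0 : 0 < Linf) (hAinf : Ainf = -Linf)
    (hL : (fun R => L R - (Linf * Real.sinh R - Kinf * Real.exp (-R)))
      =o[atTop] fun R => Real.exp (-R))
    (hA : (fun R => A R - (Linf * Real.cosh R + Ainf))
      =o[atTop] fun R => Real.exp (-R))
    (hineq : ∀ᶠ R in atTop,
      2 * L R * A R / Real.sinh R + (A R) ^ 2 ≤ (L R) ^ 2) :
    Kinf ≤ 0 := by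
  subst hAinf
  have hlim := tendsto_renormalizedConeDefect Linf Kinf tendsto_exp_neg_atTop_nhds_zero
    (tendsto_exp_mul_of_isLittleO_exp_neg hL) (tendsto_exp_mul_of_isLittleO_exp_neg hA)
  have hnonneg : ∀ᶠ R in atTop, 0 ≤ renormalizedConeDefect Linf Kinf (exp (-R))
      (exp R * (L R - (Linf * sinh R - Kinf * exp (-R))))
      (exp R * (A R - (Linf * cosh R + -Linf))) := by
    filter_upwards [hineq, eventually_gt_atTop 0] with R hcone hR
    rw [← sub_eq_add_neg, ← exp_neg_mul_cone_eq_renormalizedConeDefect]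
    exact mul_nonneg (exp_pos _).le ((div_add_sq_le_sq_iff (sinh_pos_iff.2 hR) _ _).1 hcone)
  have : 0 ≤ -(Linf * Kinf) := ge_of_tendsto hlim hnonneg
  nlinarith
end

section
/- For any closed embedded C¹ curve Γ ⊂ S^{n−1} ⊂ ℝⁿ, sup_{a ∈ Bⁿ} ∫_Γ √(1−|a|²)/(1 − a·x) ds(x) ≥ 2π, where Bⁿ is the open unit ball in ℝⁿ. -/
open scoped RealInnerProductSpace

set_option maxHeartbeats 1000000

lemma my_arctan_le_self {y : ℝ} (hy : 0 ≤ y) : Real.arctan y ≤ y := by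
  nth_rewrite 2 [← Real.tan_arctan y]
  exact Real.le_tan (by simpa using Real.arctan_strictMono.monotone hy) (Real.arctan_lt_pi_div_two y)

lemma my_arctan_lower {x : ℝ} (hx : 0 < x) : Real.pi / 2 - 1 / x ≤ Real.arctan x := by
  have h := Real.arctan_inv_of_pos hx
  have h2 : Real.arctan x⁻¹ ≤ x⁻¹ := my_arctan_le_self (by positivity)
  rw [h] at h2
  rw [one_div]
  linarith

lemma my_integral_inv_quadratic {A B m p q : ℝ} (hA : 0 < A) (hB : 0 < B) :
    ∫ t in p..q, 1 / (A + B * (t - m) ^ 2) =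
      (Real.sqrt A * Real.sqrt B)⁻¹ *
        (Real.arctan (Real.sqrt (B / A) * (q - m)) -
          Real.arctan (Real.sqrt (B / A) * (p - m))) := by
  set k := Real.sqrt (B / A) with hk
  have hkd : k = Real.sqrt B / Real.sqrt A := Real.sqrt_div hB.le A
  have hsA : 0 < Real.sqrt A := Real.sqrt_pos.mpr hA
  have hsB : 0 < Real.sqrt B := Real.sqrt_pos.mpr hB
  have hAA : Real.sqrt A * Real.sqrt A = A := Real.mul_self_sqrt hA.le
  have hBB : Real.sqrt B * Real.sqrt B = B := Real.mul_self_sqrt hB.le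
  have key : ∀ t : ℝ, HasDerivAt (fun t => (Real.sqrt A * Real.sqrt B)⁻¹ *
      Real.arctan (k * (t - m))) (1 / (A + B * (t - m) ^ 2)) t := by
    intro t
    have h1 : HasDerivAt (fun t : ℝ => k * (t - m)) k t := by
      simpa using ((hasDerivAt_id t).sub_const m).const_mul k
    have h2 := (Real.hasDerivAt_arctan (k * (t - m))).comp t h1
    have h3 := h2.const_mul (Real.sqrt A * Real.sqrt B)⁻¹
    convert h3 using 1
    case e'_4 => rfl
    case e'_5 => rfl
    case e'_8 => rfl
    have hden : 0 < A + B * (t - m) ^ 2 := by positivity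
    have hden2 : 0 < 1 + (k * (t - m)) ^ 2 := by positivity
    rw [hkd]
    field_simp
    linear_combination hAA + (t - m) ^ 2 * hBB
  have hint : IntervalIntegrable (fun t => 1 / (A + B * (t - m) ^ 2)) MeasureTheory.volume p q := by
    apply Continuous.intervalIntegrable
    have : ∀ t : ℝ, A + B * (t - m) ^ 2 ≠ 0 := fun t => by positivity
    exact continuous_const.div (by continuity) this
  rw [intervalIntegral.integral_eq_sub_of_hasDerivAt (fun t _ => key t) hint]
  ring

/-- Li–Yau conformal length lower bound for closed curves in the sphere: for any closed
embedded `C¹` curve `γ` in `S^{n−1}`, the supremum over `a` in the open unit ball of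
`∫_γ √(1−|a|²)/(1 − a·x) ds(x)` is at least `2π`. -/
theorem conformal_length_ge_two_pi {n : ℕ}
    (γ : ℝ → EuclideanSpace ℝ (Fin n))
    (hγ : ContDiff ℝ 1 γ)
    (hper : ∀ t, γ (t + 1) = γ t)
    (hunit : ∀ t, ‖γ t‖ = 1)
    (hreg : ∀ t, deriv γ t ≠ 0)
    (hinj : Set.InjOn γ (Set.Ico (0 : ℝ) 1)) :
    ∀ ε > 0, ∃ a : EuclideanSpace ℝ (Fin n), ‖a‖ < 1 ∧
      2 * Real.pi - ε ≤
        ∫ t in (0 : ℝ)..1,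
          Real.sqrt (1 - ‖a‖ ^ 2) / (1 - ⟪a, γ t⟫) * ‖deriv γ t‖ := by
  intro ε hε
  have hπ := Real.pi_pos
  set x₀ := γ (1/2) with hx₀def
  set v := ‖deriv γ (1/2)‖ with hvdef
  have hvpos : 0 < v := norm_pos_iff.mpr (hreg _)
  set η := min (v/2) (ε * v / (8 * Real.pi)) with hηdef
  have hηpos : 0 < η := lt_min (by positivity) (by positivity)
  have hηv : η ≤ v/2 := min_le_left _ _
  have hηε : η ≤ ε * v / (8 * Real.pi) := min_le_right _ _
  set w := v + η with hwdef
  have hwpos : 0 < w := by positivity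
  have hvη : 0 < v - η := by linarith
  -- continuity of the derivative's norm
  have hdiff : Differentiable ℝ γ := hγ.differentiable one_ne_zero
  have hdcont : Continuous fun t => ‖deriv γ t‖ := (hγ.continuous_deriv le_rfl).norm
  obtain ⟨δ', hδ'pos, hδ'⟩ :=
    Metric.continuousAt_iff.mp (hdcont.continuousAt (x := 1/2)) η hηpos
  set δ := min (δ'/2) (1/4) with hδdef
  have hδpos : 0 < δ := lt_min (by positivity) (by norm_num)
  have hδ4 : δ ≤ 1/4 := min_le_right _ _
  have hband : ∀ t ∈ Set.Icc (1/2 - δ) (1/2 + δ), v - η ≤ ‖deriv γ t‖ ∧ ‖deriv γ t‖ ≤ w := by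
    intro t ht
    have hδ2 : δ ≤ δ' / 2 := min_le_left _ _
    have h1 : dist t (1/2) < δ' := by
      rw [Real.dist_eq, abs_lt]
      constructor <;> [linarith [ht.1]; linarith [ht.2]]
    have h2 := hδ' h1
    rw [Real.dist_eq, abs_lt, ← hvdef] at h2
    constructor <;> [linarith [h2.1]; linarith [h2.2]]
  -- parameters
  set B := w ^ 2 / 2 with hBdef
  have hBpos : 0 < B := by positivity
  set c := Real.sqrt 2 / (δ * w) with hcdef
  have hcpos : 0 < c := by positivity
  set K := Real.pi / 2 + c with hKdef
  have hKpos : 0 < K := by positivity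
  set σ := min 1 (min (Real.pi * δ * w / 4) (ε / (8 * K))) with hσdef
  have hσpos : 0 < σ := lt_min one_pos (lt_min (by positivity) (by positivity))
  have hσ1 : σ ≤ 1 := min_le_left _ _
  have hσa : σ ≤ Real.pi * δ * w / 4 := le_trans (min_le_right _ _) (min_le_left _ _)
  have hσb : σ ≤ ε / (8 * K) := le_trans (min_le_right _ _) (min_le_right _ _)
  set r := 1 - σ ^ 2 with hrdef
  have hr0 : 0 ≤ r := by nlinarith
  have hr1 : r < 1 := by nlinarith
  have hx₀norm : ‖x₀‖ = 1 := hunit _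
  have hanorm : ‖(r • x₀ : EuclideanSpace ℝ (Fin n))‖ = r := by
    rw [norm_smul, hx₀norm, Real.norm_eq_abs, abs_of_nonneg hr0, mul_one]
  refine ⟨r • x₀, by rw [hanorm]; exact hr1, ?_⟩
  rw [hanorm]
  -- the denominator is positive everywhere
  have hiple : ∀ t, ⟪x₀, γ t⟫ ≤ 1 := by
    intro t
    calc ⟪x₀, γ t⟫ ≤ ‖x₀‖ * ‖γ t‖ := real_inner_le_norm _ _
    _ = 1 := by rw [hx₀norm, hunit t, mul_one]
  have hip2 : ∀ t, 1 - ⟪x₀, γ t⟫ = ‖γ t - x₀‖ ^ 2 / 2 := by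
    intro t
    have := @norm_sub_sq_real (EuclideanSpace ℝ (Fin n)) _ _ (γ t) x₀
    rw [hunit t, hx₀norm, real_inner_comm] at this
    rw [this]; ring
  have hdenpos : ∀ t, 0 < 1 - ⟪(r • x₀ : EuclideanSpace ℝ (Fin n)), γ t⟫ := by
    intro t
    rw [real_inner_smul_left]
    have h1 : r * ⟪x₀, γ t⟫ ≤ r * 1 := mul_le_mul_of_nonneg_left (hiple t) hr0
    have h2 : 0 < σ ^ 2 := by positivity
    rw [mul_one] at h1
    linarith
  have hdenpos' : ∀ t, 0 < 1 - r * ⟪x₀, γ t⟫ := by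
    intro t
    have := hdenpos t
    rwa [real_inner_smul_left] at this
  simp only [real_inner_smul_left]
  set F : ℝ → ℝ := fun t => Real.sqrt (1 - r ^ 2) / (1 - r * ⟪x₀, γ t⟫) * ‖deriv γ t‖ with hFdef
  have hFcont : Continuous F := by
    apply Continuous.mul
    · apply continuous_const.div
      · exact continuous_const.sub (continuous_const.mul (continuous_const.inner hγ.continuous))
      · intro t; exact (hdenpos' t).ne'
    · exact hdcont
  have hFnn : ∀ t, 0 ≤ F t := by
    intro t
    apply mul_nonneg (div_nonneg (Real.sqrt_nonneg _) (hdenpos' t).le) (norm_nonneg _)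
  set p : ℝ := 1/2 - δ with hpdef
  set q : ℝ := 1/2 + δ with hqdef
  have hp0 : (0:ℝ) ≤ p := by rw [hpdef]; linarith
  have hpq : p ≤ q := by rw [hpdef, hqdef]; linarith
  have hq1 : q ≤ 1 := by rw [hqdef]; linarith
  have hii : ∀ a b : ℝ, IntervalIntegrable F MeasureTheory.volume a b := fun a b =>
    hFcont.intervalIntegrable a b
  have hsplit : (∫ t in (0:ℝ)..1, F t) =
      (∫ t in (0:ℝ)..p, F t) + (∫ t in p..q, F t) + (∫ t in q..(1:ℝ), F t) := by
    rw [← intervalIntegral.integral_add_adjacent_intervals (hii 0 p) (hii p 1),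
      ← intervalIntegral.integral_add_adjacent_intervals (hii p q) (hii q 1)]
    ring
  have hnn1 : 0 ≤ ∫ t in (0:ℝ)..p, F t :=
    intervalIntegral.integral_nonneg hp0 (fun t _ => hFnn t)
  have hnn2 : 0 ≤ ∫ t in q..(1:ℝ), F t :=
    intervalIntegral.integral_nonneg hq1 (fun t _ => hFnn t)
  -- lower-bound the middle piece by an explicit function
  set G : ℝ → ℝ := fun t =>
    Real.sqrt (1 - r ^ 2) / (σ ^ 2 + B * (t - 1/2) ^ 2) * (v - η) with hGdef
  have hquadpos : ∀ t : ℝ, 0 < σ ^ 2 + B * (t - 1/2) ^ 2 := fun t => by positivity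
  have hGcont : Continuous G := by
    apply Continuous.mul _ continuous_const
    refine continuous_const.div ?_ (fun t => (hquadpos t).ne')
    exact continuous_const.add (continuous_const.mul ((continuous_id.sub continuous_const).pow 2))
  have hmid : (∫ t in p..q, G t) ≤ ∫ t in p..q, F t := by
    apply intervalIntegral.integral_mono_on hpq (hGcont.intervalIntegrable p q) (hii p q)
    intro t ht
    have htIcc : t ∈ Set.Icc (1/2 - δ) (1/2 + δ) := ht
    -- Lipschitz bound on the interval
    have hd1 : ‖γ t - x₀‖ ≤ w * |t - 1/2| := by
      have hmem : (1/2 : ℝ) ∈ Set.Icc (1/2 - δ) (1/2 + δ) := by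
        constructor <;> linarith
      have := (convex_Icc (1/2 - δ) (1/2 + δ)).norm_image_sub_le_of_norm_hasDerivWithin_le
        (f := γ) (f' := deriv γ)
        (fun x _ => (hdiff x).hasDerivAt.hasDerivWithinAt)
        (fun x hx => (hband x hx).2) hmem htIcc
      rw [hx₀def]
      simpa [Real.norm_eq_abs] using this
    have hden_le : 1 - r * ⟪x₀, γ t⟫ ≤ σ ^ 2 + B * (t - 1/2) ^ 2 := by
      have e1 : 1 - r * ⟪x₀, γ t⟫ = σ ^ 2 + r * (‖γ t - x₀‖ ^ 2 / 2) := by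
        rw [hrdef]
        linear_combination (1 - σ ^ 2) * (hip2 t)
      rw [e1, hBdef]
      have h2 : ‖γ t - x₀‖ ^ 2 ≤ w ^ 2 * (t - 1/2) ^ 2 := by
        calc ‖γ t - x₀‖ ^ 2 ≤ (w * |t - 1/2|) ^ 2 := pow_le_pow_left₀ (norm_nonneg _) hd1 2
          _ = w ^ 2 * (t - 1/2) ^ 2 := by rw [mul_pow, sq_abs]
      have h3 : r * (‖γ t - x₀‖ ^ 2 / 2) ≤ 1 * (‖γ t - x₀‖ ^ 2 / 2) :=
        mul_le_mul_of_nonneg_right hr1.le (by positivity)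
      rw [one_mul] at h3
      linarith only [h2, h3]
    calc G t = Real.sqrt (1 - r ^ 2) / (σ ^ 2 + B * (t - 1/2) ^ 2) * (v - η) := rfl
      _ ≤ Real.sqrt (1 - r ^ 2) / (1 - r * ⟪x₀, γ t⟫) * (v - η) := by
          gcongr
          all_goals first
            | exact Real.sqrt_nonneg _
            | exact hdenpos' t
            | exact hden_le
      _ ≤ Real.sqrt (1 - r ^ 2) / (1 - r * ⟪x₀, γ t⟫) * ‖deriv γ t‖ := by
          gcongr
          all_goals first
            | exact div_nonneg (Real.sqrt_nonneg _) (hdenpos' t).le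
            | exact (hband t htIcc).1
  -- compute the integral of G
  have hGval : (∫ t in p..q, G t) =
      (Real.sqrt (1 - r ^ 2) * (v - η)) * ((Real.sqrt (σ ^ 2) * Real.sqrt B)⁻¹ *
        (Real.arctan (Real.sqrt (B / σ ^ 2) * δ) - Real.arctan (Real.sqrt (B / σ ^ 2) * (-δ)))) := by
    have e : ∀ t : ℝ, G t = (Real.sqrt (1 - r ^ 2) * (v - η)) * (1 / (σ ^ 2 + B * (t - 1/2) ^ 2)) := by
      intro t; rw [hGdef]; ring
    simp only [e]
    rw [intervalIntegral.integral_const_mul,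
      my_integral_inv_quadratic (by positivity) hBpos]
    norm_num [hpdef, hqdef]
  have hGval2 : (∫ t in p..q, G t) =
      Real.sqrt (1 - r ^ 2) * (v - η) * ((Real.sqrt (σ ^ 2) * Real.sqrt B)⁻¹ *
        (2 * Real.arctan (Real.sqrt (B / σ ^ 2) * δ))) := by
    rw [hGval, mul_neg, Real.arctan_neg]
    ring
  set x := Real.sqrt (B / σ ^ 2) * δ with hxdef
  set A1 := Real.arctan x with hA1def
  set S := Real.sqrt (2 - σ ^ 2) with hSdef
  have hσs : Real.sqrt (σ ^ 2) = σ := Real.sqrt_sq hσpos.le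
  have h2pos : (0:ℝ) < Real.sqrt 2 := Real.sqrt_pos.mpr (by norm_num)
  have hsqB : Real.sqrt B = w / Real.sqrt 2 := by
    rw [hBdef, Real.sqrt_div (sq_nonneg w) 2, Real.sqrt_sq hwpos.le]
  have hkval : Real.sqrt (B / σ ^ 2) = w / (Real.sqrt 2 * σ) := by
    rw [Real.sqrt_div hBpos.le, hσs, hsqB, div_div]
  have hxpos : 0 < x := by
    rw [hxdef, hkval]
    exact mul_pos (div_pos hwpos (mul_pos h2pos hσpos)) hδpos
  have hA1nn : 0 ≤ A1 := by
    rw [hA1def]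
    simpa using Real.arctan_strictMono.monotone hxpos.le
  have hinvx : 1 / x = c * σ := by
    rw [hxdef, hkval, hcdef]
    rw [div_mul_eq_mul_div, one_div_div]
    field_simp
  have harct : Real.pi / 2 - c * σ ≤ A1 := by
    have h := my_arctan_lower hxpos
    rw [hinvx] at h
    exact h
  have hS2 : Real.sqrt 2 * (1 - σ) ≤ S := by
    have hσσ : σ * σ ≤ σ := by
      calc σ * σ ≤ σ * 1 := mul_le_mul_of_nonneg_left hσ1 hσpos.le
        _ = σ := mul_one σ
    have h1 : 2 * (1 - σ) ^ 2 ≤ 2 - σ ^ 2 := by nlinarith only [hσσ, hσpos.le]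
    calc Real.sqrt 2 * (1 - σ) = Real.sqrt (2 * (1 - σ) ^ 2) := by
          rw [Real.sqrt_mul (by norm_num : (0:ℝ) ≤ 2), Real.sqrt_sq (by linarith)]
      _ ≤ S := Real.sqrt_le_sqrt h1
  have hsq1r2 : Real.sqrt (1 - r ^ 2) = σ * S := by
    have he : 1 - r ^ 2 = σ ^ 2 * (2 - σ ^ 2) := by rw [hrdef]; ring
    rw [he, Real.sqrt_mul (sq_nonneg σ), hσs, hSdef]
  have hEval : (∫ t in p..q, G t) = 2 * Real.sqrt 2 * (v - η) * S * A1 / w := by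
    rw [hGval2, hsq1r2, hσs, hsqB]
    field_simp
  -- key numeric bounds
  have hπη : 8 * Real.pi * η ≤ ε * v := by
    have hm : (0:ℝ) < 8 * Real.pi := by linarith only [hπ]
    have h := mul_le_mul_of_nonneg_left hηε hm.le
    have he : 8 * Real.pi * (ε * v / (8 * Real.pi)) = ε * v := by
      field_simp
    rw [he] at h
    exact h
  have hKσ : 8 * K * σ ≤ ε := by
    have hm : (0:ℝ) < 8 * K := by linarith only [hKpos]
    have h := mul_le_mul_of_nonneg_left hσb hm.le
    have he : 8 * K * (ε / (8 * K)) = ε := by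
      field_simp
    rw [he] at h
    exact h
  have m1 : 4 * K * σ * (v - η) ≤ ε / 2 * (v - η) := by
    have h4 : 4 * K * σ ≤ ε / 2 := by
      have he : 4 * K * σ = (8 * K * σ) / 2 := by ring
      rw [he]
      gcongr
    exact mul_le_mul_of_nonneg_right h4 hvη.le
  have m2 : (0:ℝ) ≤ ε * η := mul_nonneg hε.le hηpos.le
  have hnum : (2 * Real.pi - ε) * w ≤ 2 * Real.sqrt 2 * (v - η) * S * A1 := by
    calc (2 * Real.pi - ε) * w ≤ 4 * (v - η) * (Real.pi / 2 - K * σ) := by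
          rw [hwdef]
          nlinarith only [hπη, m1, m2]
      _ ≤ 4 * (v - η) * ((1 - σ) * A1) := by
          have hinner : Real.pi / 2 - K * σ ≤ (1 - σ) * (Real.pi / 2 - c * σ) := by
            have he : (1 - σ) * (Real.pi / 2 - c * σ) = Real.pi / 2 - K * σ + c * σ ^ 2 := by
              rw [hKdef]; ring
            have hc2 : (0:ℝ) ≤ c * σ ^ 2 := mul_nonneg hcpos.le (sq_nonneg σ)
            linarith only [he, hc2]
          have hmono : (1 - σ) * (Real.pi / 2 - c * σ) ≤ (1 - σ) * A1 :=
            mul_le_mul_of_nonneg_left harct (by linarith only [hσ1])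
          have h := mul_le_mul_of_nonneg_left (le_trans hinner hmono)
            (by linarith only [hvη] : (0:ℝ) ≤ 4 * (v - η))
          linarith only [h]
      _ ≤ 2 * Real.sqrt 2 * (v - η) * S * A1 := by
          have h22 : Real.sqrt 2 * Real.sqrt 2 = 2 := Real.mul_self_sqrt (by norm_num)
          have hstep : 4 * (v - η) * ((1 - σ) * A1) =
              2 * Real.sqrt 2 * (v - η) * (Real.sqrt 2 * (1 - σ)) * A1 := by
            linear_combination (-(2 * (v - η) * (1 - σ) * A1)) * h22
          rw [hstep]
          have h := mul_le_mul_of_nonneg_right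
            (mul_le_mul_of_nonneg_left hS2
              (mul_nonneg (mul_nonneg (by norm_num : (0:ℝ) ≤ 2) h2pos.le) hvη.le)) hA1nn
          linarith only [h]
  have hfinal : 2 * Real.pi - ε ≤ (∫ t in p..q, G t) := by
    rw [hEval, le_div_iff₀ hwpos]
    exact hnum
  rw [hsplit]
  linarith only [hnn1, hnn2, hmid, hfinal]
end
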